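/- arXiv:2405.15702 — 8 statements merged into one kernel-verified Lean document; each statement's English description precedes it below -/
import Mathlib

section
/- For every price vector p there exists a price vector q with q_i ∈ B for every product i ∈ I such that φ(q) ≥ φ(p). -/
open Finset

/-- `c` is the (unique) optimal-choice map for price vector `p`: for each customer `k`,
`c k = some i` means `i` is affordable and maximizes the preference `s k` over the
affordable set `A_k(p)`, and `c k = none` means the affordable set is empty. -/
def IsChoice {I K : Type*} (b : K → ℝ) (s : K → I → ℝ) (p : I → ℝ)
    (c : K → Option I) : Prop :=
  ∀ k : K,
    (∀ i : I, c k = some i → p i ≤ b k ∧ ∀ j : I, p j ≤ b k → s k j ≤ s k i) ∧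
    (c k = none → ∀ i : I, ¬ p i ≤ b k)

/-- Revenue `φ(p) = ∑_{k ∈ K} p_{c(k)}`, a customer buying no product contributing `0`. -/
noncomputable def revenue {I K : Type*} [Fintype K] (p : I → ℝ)
    (c : K → Option I) : ℝ :=
  ∑ k : K, (c k).elim 0 p

/-- For every price vector `p` there is a price vector `q` taking values in the set of
budgets `B` with revenue at least that of `p`. -/
theorem rpp_exists_budget_priced_improvement
    {I K : Type*} [Fintype I] [Nonempty I] [DecidableEq I] [Fintype K] [Nonempty K]
    (b : K → ℝ) (hb : ∀ k, 0 < b k)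
    (s : K → I → ℝ) (hs : ∀ k i, 0 < s k i)
    (hinj : ∀ k, Function.Injective (s k))
    (p : I → ℝ) (hp : ∀ i, 0 ≤ p i)
    (cp : K → Option I) (hcp : IsChoice b s p cp) :
    ∃ (q : I → ℝ) (cq : K → Option I),
      (∀ i, ∃ k, q i = b k) ∧ IsChoice b s q cq ∧
      revenue p cp ≤ revenue q cq := by
  classical
  set B : Finset ℝ := Finset.image b Finset.univ with hB
  have hBne : B.Nonempty := ⟨b (Classical.arbitrary K), by simp [hB]⟩
  have hmemB : ∀ k, b k ∈ B := fun k => by simp [hB]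
  set q : I → ℝ := fun i => if h : (B.filter (fun x => p i ≤ x)).Nonempty
      then (B.filter (fun x => p i ≤ x)).min' h else B.max' hBne with hq
  have hqB : ∀ i, ∃ k, q i = b k := by
    intro i
    have : q i ∈ B := by
      rw [hq]; dsimp only
      split
      · exact (Finset.mem_filter.1 (Finset.min'_mem _ _)).1
      · exact Finset.max'_mem _ _
    obtain ⟨k, _, hk⟩ := Finset.mem_image.1 this
    exact ⟨k, hk.symm⟩
  have hqpos : ∀ i, 0 < q i := by
    intro i; obtain ⟨k, hk⟩ := hqB i; rw [hk]; exact hb k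
  have h1 : ∀ i k, p i ≤ b k → q i ≤ b k ∧ p i ≤ q i := by
    intro i k hik
    have hne : (B.filter (fun x => p i ≤ x)).Nonempty :=
      ⟨b k, Finset.mem_filter.2 ⟨hmemB k, hik⟩⟩
    have hqi : q i = (B.filter (fun x => p i ≤ x)).min' hne := by
      rw [hq]; simp [hne]
    constructor
    · rw [hqi]; exact Finset.min'_le _ _ (Finset.mem_filter.2 ⟨hmemB k, hik⟩)
    · rw [hqi]; exact (Finset.mem_filter.1 (Finset.min'_mem _ _)).2
  have h2 : ∀ i k, b k < p i → q i ≤ b k → q i = b k := by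
    intro i k hlt hle
    have hfe : ¬ (B.filter (fun x => p i ≤ x)).Nonempty := by
      intro hne
      have hqi : q i = (B.filter (fun x => p i ≤ x)).min' hne := by
        rw [hq]; simp [hne]
      have : p i ≤ q i := by rw [hqi]; exact (Finset.mem_filter.1 (Finset.min'_mem _ _)).2
      linarith
    have hqi : q i = B.max' hBne := by rw [hq]; simp [hfe]
    have : b k ≤ q i := by rw [hqi]; exact Finset.le_max' _ _ (hmemB k)
    linarith
  have hcq : ∀ k, ∃ c : Option I,
      ((∀ i, c = some i → q i ≤ b k ∧ ∀ j, q j ≤ b k → s k j ≤ s k i) ∧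
       (c = none → ∀ i, ¬ q i ≤ b k)) := by
    intro k
    by_cases h : (Finset.univ.filter (fun i => q i ≤ b k)).Nonempty
    · obtain ⟨i, hi, hmax⟩ := Finset.exists_max_image _ (s k) h
      refine ⟨some i, fun j hj => ?_, by simp⟩
      cases Option.some.inj hj
      exact ⟨(Finset.mem_filter.1 hi).2,
        fun j' hj' => hmax j' (Finset.mem_filter.2 ⟨Finset.mem_univ _, hj'⟩)⟩
    · exact ⟨none, ⟨by simp, fun _ i hi =>
        h ⟨i, Finset.mem_filter.2 ⟨Finset.mem_univ _, hi⟩⟩⟩⟩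
  choose cq hcqs hcqn using hcq
  refine ⟨q, cq, hqB, fun k => ⟨hcqs k, hcqn k⟩, ?_⟩
  unfold revenue
  apply Finset.sum_le_sum
  intro k _
  rcases hcp1 : cp k with _ | i
  · simp only [Option.elim]
    rcases hcq1 : cq k with _ | j
    · simp
    · simp only [Option.elim]; exact le_of_lt (hqpos j)
  · obtain ⟨hib, hmax⟩ := (hcp k).1 i hcp1
    have hqib : q i ≤ b k := (h1 i k hib).1
    rcases hcq1 : cq k with _ | j
    · exact absurd hqib (hcqn k hcq1 i)
    · obtain ⟨hjb, hjmax⟩ := hcqs k j hcq1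
      simp only [Option.elim]
      by_cases hpj : p j ≤ b k
      · have hji : s k j ≤ s k i := hmax j hpj
        have hij : s k i ≤ s k j := hjmax i hqib
        have : i = j := hinj k (le_antisymm hij hji)
        subst this
        exact (h1 i k hib).2
      · push_neg at hpj
        have := h2 j k hpj hjb
        linarith
end

section
/- The supremum of φ(p) over all price vectors p (with p_i ≥ 0 for all i ∈ I) is attained, and it equals the maximum of φ(q) over the finitely many price vectors q with q_i ∈ B for every product i; in particular, the RPP admits an optimal price vector all of whose components are budget values. -/
open Finset

/-- Every price vector admits an optimal-choice map. -/
lemma exists_isChoice {I K : Type*} [Fintype I] (b : K → ℝ) (s : K → I → ℝ)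
    (p : I → ℝ) : ∃ c : K → Option I, IsChoice b s p c := by
  classical
  have H : ∀ k : K, ∃ o : Option I,
      (∀ i : I, o = some i → p i ≤ b k ∧ ∀ j : I, p j ≤ b k → s k j ≤ s k i) ∧
      (o = none → ∀ i : I, ¬ p i ≤ b k) := by
    intro k
    by_cases h : (Finset.univ.filter (fun i => p i ≤ b k)).Nonempty
    · obtain ⟨i, hi, hmax⟩ := Finset.exists_max_image _ (s k) h
      simp only [Finset.mem_filter, Finset.mem_univ, true_and] at hi hmax
      refine ⟨some i, ?_, by simp⟩
      intro i' hi'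
      obtain rfl : i = i' := by simpa using hi'
      exact ⟨hi, fun j hj => hmax j (by simpa using hj)⟩
    · refine ⟨none, by simp, ?_⟩
      intro _ i hip
      exact h ⟨i, by simp [hip]⟩
  choose c hc using H
  exact ⟨c, hc⟩

/-- The supremum of the revenue `φ` over all price vectors is attained, and it is
attained at a price vector all of whose components are budget values. -/
theorem rpp_optimum_attained_on_budget_grid
    {I K : Type*} [Fintype I] [Nonempty I] [DecidableEq I] [Fintype K] [Nonempty K]
    (b : K → ℝ) (hb : ∀ k, 0 < b k)
    (s : K → I → ℝ) (hs : ∀ k i, 0 < s k i)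
    (hinj : ∀ k, Function.Injective (s k)) :
    ∃ (q : I → ℝ) (cq : K → Option I),
      (∀ i, ∃ k, q i = b k) ∧ IsChoice b s q cq ∧
      ∀ (p : I → ℝ), (∀ i, 0 ≤ p i) →
        ∀ cp : K → Option I, IsChoice b s p cp →
          revenue p cp ≤ revenue q cq := by
  classical
  set B : Finset ℝ := Finset.univ.image b with hB
  have hbmem : ∀ k, b k ∈ B := fun k => Finset.mem_image_of_mem b (Finset.mem_univ k)
  have hBne : B.Nonempty := ⟨b (Classical.arbitrary K), hbmem _⟩
  -- rounding a price vector up to the budget grid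
  let round : (I → ℝ) → I → ℝ := fun p i =>
    if h : ((B.filter (fun x => p i ≤ x)).Nonempty) then (B.filter (fun x => p i ≤ x)).min' h
    else B.max' hBne
  have hround_mem : ∀ p i, round p i ∈ B := by
    intro p i
    simp only [round]
    split
    · exact Finset.mem_of_mem_filter _ (Finset.min'_mem _ _)
    · exact Finset.max'_mem _ _
  have hup : ∀ (p : I → ℝ) (i : I) (k : K), p i ≤ b k → round p i ≤ b k := by
    intro p i k h
    have hne : ((B.filter (fun x => p i ≤ x)).Nonempty) :=
      ⟨b k, Finset.mem_filter.2 ⟨hbmem k, h⟩⟩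
    simp only [round, dif_pos hne]
    exact Finset.min'_le _ _ (Finset.mem_filter.2 ⟨hbmem k, h⟩)
  have hge : ∀ (p : I → ℝ) (i : I), ((B.filter (fun x => p i ≤ x)).Nonempty) →
      p i ≤ round p i := by
    intro p i hne
    simp only [round, dif_pos hne]
    exact (Finset.mem_filter.1 (Finset.min'_mem _ hne)).2
  have hdown : ∀ (p : I → ℝ) (i : I) (k : K), round p i ≤ b k →
      p i ≤ b k ∨ round p i = b k := by
    intro p i k h
    by_cases hne : ((B.filter (fun x => p i ≤ x)).Nonempty)
    · exact Or.inl ((hge p i hne).trans h)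
    · right
      simp only [round, dif_neg hne] at h ⊢
      exact le_antisymm h (Finset.le_max' _ _ (hbmem k))
  have hpos : ∀ (p : I → ℝ) (i : I), 0 ≤ round p i := by
    intro p i
    obtain ⟨k, _, hk⟩ := Finset.mem_image.1 (hround_mem p i)
    exact hk ▸ (hb k).le
  -- the finite grid of price vectors with budget values
  let G : Finset (I → ℝ) := Fintype.piFinset (fun _ => B)
  have hGne : G.Nonempty :=
    ⟨fun _ => B.max' hBne, Fintype.mem_piFinset.2 fun _ => Finset.max'_mem _ _⟩
  let ch : (I → ℝ) → (K → Option I) := fun p => Classical.choose (exists_isChoice b s p)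
  have hch : ∀ p, IsChoice b s p (ch p) := fun p => Classical.choose_spec (exists_isChoice b s p)
  obtain ⟨q, hqG, hqmax⟩ := G.exists_max_image (fun r => revenue r (ch r)) hGne
  refine ⟨q, ch q, ?_, hch q, ?_⟩
  · intro i
    obtain ⟨k, _, hk⟩ := Finset.mem_image.1 (Fintype.mem_piFinset.1 hqG i)
    exact ⟨k, hk.symm⟩
  · intro p hp cp hcp
    have h1 : revenue p cp ≤ revenue (round p) (ch (round p)) := by
      apply Finset.sum_le_sum
      intro k _
      rcases hc : ch (round p) k with _ | j
      · have hnone := (hch (round p) k).2 hc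
        rcases hcp' : cp k with _ | i
        · simp
        · obtain ⟨hpib, _⟩ := (hcp k).1 i hcp'
          exact absurd (hup p i k hpib) (hnone i)
      · obtain ⟨hqjb, hjmax⟩ := (hch (round p) k).1 j hc
        rcases hcp' : cp k with _ | i
        · simpa using hpos p j
        · obtain ⟨hpib, himax⟩ := (hcp k).1 i hcp'
          simp only [Option.elim]
          rcases hdown p j k hqjb with hpjb | heq
          · have h1 : s k i ≤ s k j := hjmax i (hup p i k hpib)
            have h2 : s k j ≤ s k i := himax j hpjb
            obtain rfl : i = j := hinj k (le_antisymm h1 h2)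
            exact hge p i ⟨b k, Finset.mem_filter.2 ⟨hbmem k, hpib⟩⟩
          · rw [heq]; exact hpib
    have h2 : revenue (round p) (ch (round p)) ≤ revenue q (ch q) := by
      exact hqmax _ (Fintype.mem_piFinset.2 fun i => hround_mem p i)
    exact h1.trans h2
end

section
/- (Monotone invariance) Let p and q be price vectors with p_i ≤ q_i for every product i ∈ I, and suppose that every customer k who buys a product under p, say c_p(k) = i, satisfies q_i ≤ b^k. Then c_q(k) = c_p(k) for every customer k ∈ K, and φ(q) ≥ φ(p). -/
open Finset

/-- Monotone invariance: if `p ≤ q` componentwise and every customer buying product `i`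
under `p` still affords it under `q`, then all choices are unchanged and revenue does
not decrease. -/
theorem rpp_monotone_invariance
    {I K : Type*} [Fintype I] [Nonempty I] [DecidableEq I] [Fintype K] [Nonempty K]
    (b : K → ℝ) (hb : ∀ k, 0 < b k)
    (s : K → I → ℝ) (hs : ∀ k i, 0 < s k i)
    (hinj : ∀ k, Function.Injective (s k))
    (p q : I → ℝ) (hp : ∀ i, 0 ≤ p i) (hq : ∀ i, 0 ≤ q i)
    (hpq : ∀ i, p i ≤ q i)
    (cp cq : K → Option I)
    (hcp : IsChoice b s p cp) (hcq : IsChoice b s q cq)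
    (hafford : ∀ k i, cp k = some i → q i ≤ b k) :
    (∀ k, cq k = cp k) ∧ revenue p cp ≤ revenue q cq := by
  have hkey : ∀ k, cq k = cp k := by
    intro k
    cases hcp' : cp k with
    | none =>
      cases hcq' : cq k with
      | none => rfl
      | some j =>
        have hqj := ((hcq k).1 j hcq').1
        exact absurd (le_trans (hpq j) hqj) ((hcp k).2 hcp' j)
    | some i =>
      have hqi : q i ≤ b k := hafford k i hcp'
      cases hcq' : cq k with
      | none => exact absurd hqi ((hcq k).2 hcq' i)
      | some j =>
        have h1 := (hcq k).1 j hcq'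
        have h2 := (hcp k).1 i hcp'
        have hji : s k j ≤ s k i := h2.2 j (le_trans (hpq j) h1.1)
        have hij : s k i ≤ s k j := h1.2 i hqi
        exact congrArg some (hinj k (le_antisymm hji hij))
  refine ⟨hkey, ?_⟩
  unfold revenue
  apply Finset.sum_le_sum
  intro k _
  rw [hkey k]
  cases hcp' : cp k with
  | none => simp
  | some i => simpa using hpq i
end

section
/- (Slack local search) Let p be a price vector and i0 ∈ I a product whose buyer set K̂ = {k ∈ K : c_p(k) = i0} is nonempty, and let β = min_{k ∈ K̂} b^k. Define q by q_j = p_j for j ≠ i0 and q_{i0} = β. Then c_q(k) = c_p(k) for every customer k, and φ(q) = φ(p) + |K̂|·(β − p_{i0}) ≥ φ(p), with strict inequality if and only if p_{i0} < β. -/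
open Finset

/-- Slack local search: raising the price of a product `i0` with nonempty buyer set `K̂`
to `β = min_{k ∈ K̂} b k` leaves every customer's choice unchanged and increases the
revenue by `|K̂|·(β - p i0) ≥ 0`, strictly iff `p i0 < β`. -/
theorem rpp_slack_local_search
    {I K : Type*} [Fintype I] [Nonempty I] [DecidableEq I] [Fintype K] [Nonempty K]
    (b : K → ℝ) (hb : ∀ k, 0 < b k)
    (s : K → I → ℝ) (hs : ∀ k i, 0 < s k i)
    (hinj : ∀ k, Function.Injective (s k))
    (p : I → ℝ) (hp : ∀ i, 0 ≤ p i) (i0 : I)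
    (cp : K → Option I) (hcp : IsChoice b s p cp)
    (hne : (Finset.univ.filter fun k => cp k = some i0).Nonempty)
    (β : ℝ) (hβ : β = (Finset.univ.filter fun k => cp k = some i0).inf' hne b)
    (cq : K → Option I)
    (hcq : IsChoice b s (Function.update p i0 β) cq) :
    (∀ k, cq k = cp k) ∧
    revenue (Function.update p i0 β) cq =
      revenue p cp
        + ((Finset.univ.filter fun k => cp k = some i0).card : ℝ) * (β - p i0) ∧
    revenue p cp ≤ revenue (Function.update p i0 β) cq ∧
    (revenue p cp < revenue (Function.update p i0 β) cq ↔ p i0 < β) := by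
  have hβge : p i0 ≤ β := by
    rw [hβ]
    apply Finset.le_inf'
    intro k hk
    simp only [Finset.mem_filter, Finset.mem_univ, true_and] at hk
    exact ((hcp k).1 i0 hk).1
  have hqle : ∀ k, cp k = some i0 → β ≤ b k := by
    intro k hk
    rw [hβ]
    exact Finset.inf'_le b (by simp [hk])
  have hsame : ∀ k, cq k = cp k := by
    intro k
    rcases h : cp k with _ | j
    · rcases h' : cq k with _ | i
      · rfl
      · exfalso
        have hqi := ((hcq k).1 i h').1
        have hnone := (hcp k).2 h i
        by_cases hi : i = i0
        · subst hi
          rw [Function.update_self] at hqi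
          exact hnone (le_trans hβge hqi)
        · rw [Function.update_of_ne hi] at hqi
          exact hnone hqi
    · have hj := (hcp k).1 j h
      have hjq : Function.update p i0 β j ≤ b k := by
        by_cases hji : j = i0
        · subst hji; rw [Function.update_self]; exact hqle k h
        · rw [Function.update_of_ne hji]; exact hj.1
      rcases h' : cq k with _ | i
      · exact absurd hjq ((hcq k).2 h' j)
      · have hi := (hcq k).1 i h'
        have hip : p i ≤ b k := by
          by_cases hii : i = i0
          · subst hii
            rw [Function.update_self] at hi
            exact le_trans hβge hi.1
          · rw [Function.update_of_ne hii] at hi; exact hi.1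
        have h1 : s k j ≤ s k i := hi.2 j hjq
        have h2 : s k i ≤ s k j := hj.2 i hip
        have : i = j := hinj k (le_antisymm h2 h1)
        rw [this]
  have hrev : revenue (Function.update p i0 β) cq =
      revenue p cp
        + ((Finset.univ.filter fun k => cp k = some i0).card : ℝ) * (β - p i0) := by
    unfold revenue
    have hterm : ∀ k, (cq k).elim 0 (Function.update p i0 β) =
        (cp k).elim 0 p + if cp k = some i0 then β - p i0 else 0 := by
      intro k
      rw [hsame k]
      rcases h : cp k with _ | j
      · simp
      · by_cases hji : j = i0
        · subst hji; simp [Function.update_self]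
        · simp [Function.update_of_ne hji, hji]
    simp_rw [hterm]
    rw [Finset.sum_add_distrib]
    congr 1
    rw [← Finset.sum_filter, Finset.sum_const, nsmul_eq_mul]
  have hcard : (0 : ℝ) < ((Finset.univ.filter fun k => cp k = some i0).card : ℝ) := by
    exact_mod_cast Finset.card_pos.mpr hne
  refine ⟨hsame, hrev, ?_, ?_⟩
  · rw [hrev]
    nlinarith
  · rw [hrev]
    constructor
    · intro hlt
      by_contra hge
      push_neg at hge
      nlinarith
    · intro hlt
      nlinarith
end

section
/- (Simultaneous slack adjustment) Let p be a price vector and, for each product i, let K^i(p) = {k ∈ K : c_p(k) = i} be its buyer set. Define q by q_i = min_{k ∈ K^i(p)} b^k if K^i(p) ≠ ∅, and q_i = p_i otherwise. Then c_q(k) = c_p(k) for every customer k, q_i ∈ B for every product i with K^i(p) ≠ ∅, and φ(q) = Σ_{i : K^i(p) ≠ ∅} |K^i(p)| · min_{k ∈ K^i(p)} b^k ≥ φ(p). -/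
open Finset

/-- Simultaneous slack adjustment: setting the price of every sold product to the
minimum budget of its buyers leaves all choices unchanged, makes those prices budget
values, and yields revenue `∑_{i : K^i ≠ ∅} |K^i| · min_{k ∈ K^i} b k ≥ φ(p)`. -/
theorem rpp_simultaneous_slack_adjustment
    {I K : Type*} [Fintype I] [Nonempty I] [DecidableEq I] [Fintype K] [Nonempty K]
    (b : K → ℝ) (hb : ∀ k, 0 < b k)
    (s : K → I → ℝ) (hs : ∀ k i, 0 < s k i)
    (hinj : ∀ k, Function.Injective (s k))
    (p : I → ℝ) (hp : ∀ i, 0 ≤ p i)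
    (cp : K → Option I) (hcp : IsChoice b s p cp)
    (q : I → ℝ)
    (hq : ∀ i, q i =
      if h : (Finset.univ.filter fun k => cp k = some i).Nonempty then
        (Finset.univ.filter fun k => cp k = some i).inf' h b
      else p i)
    (cq : K → Option I) (hcq : IsChoice b s q cq) :
    (∀ k, cq k = cp k) ∧
    (∀ i, (Finset.univ.filter fun k => cp k = some i).Nonempty → ∃ k, q i = b k) ∧
    revenue q cq =
      ∑ i ∈ Finset.univ.filter
          (fun i => (Finset.univ.filter fun k => cp k = some i).Nonempty),
        ((Finset.univ.filter fun k => cp k = some i).card : ℝ) * q i ∧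
    revenue p cp ≤ revenue q cq := by
  have hpq : ∀ i, p i ≤ q i := by
    intro i
    rw [hq i]
    split
    · next h =>
      apply Finset.le_inf'
      intro k hk
      simp only [Finset.mem_filter, Finset.mem_univ, true_and] at hk
      exact ((hcp k).1 i hk).1
    · exact le_rfl
  have hqb : ∀ k i, cp k = some i → q i ≤ b k := by
    intro k i hk
    have hmem : k ∈ Finset.univ.filter fun k => cp k = some i := by
      simp [hk]
    rw [hq i, dif_pos ⟨k, hmem⟩]
    exact Finset.inf'_le b hmem
  have hmain : ∀ k, cq k = cp k := by
    intro k
    cases hcpk : cp k with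
    | none =>
      have hno : ∀ i, ¬ q i ≤ b k := fun i h =>
        (hcp k).2 hcpk i (le_trans (hpq i) h)
      cases hcqk : cq k with
      | none => rfl
      | some i => exact absurd ((hcq k).1 i hcqk).1 (hno i)
    | some i =>
      cases hcqk : cq k with
      | none => exact absurd (hqb k i hcpk) ((hcq k).2 hcqk i)
      | some i' =>
        have h1 := (hcq k).1 i' hcqk
        have h2 := (hcp k).1 i hcpk
        have hle : s k i' ≤ s k i := h2.2 i' (le_trans (hpq i') h1.1)
        have hge : s k i ≤ s k i' := h1.2 i (hqb k i hcpk)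
        exact congrArg some (hinj k (le_antisymm hle hge))
  refine ⟨hmain, ?_, ?_, ?_⟩
  · intro i h
    obtain ⟨k, hk, hkeq⟩ := Finset.exists_mem_eq_inf' h b
    exact ⟨k, by rw [hq i, dif_pos h, hkeq]⟩
  · have hrw : revenue q cq = ∑ k : K, (cp k).elim 0 q := by
      unfold revenue
      exact Finset.sum_congr rfl fun k _ => by rw [hmain k]
    rw [hrw]
    have hfib : ∑ k : K, (cp k).elim 0 q =
        ∑ o : Option I, ∑ k ∈ Finset.univ.filter (fun k => cp k = o),
          (cp k).elim 0 q := by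
      exact (Finset.sum_fiberwise_of_maps_to (fun k _ => Finset.mem_univ (cp k)) _).symm
    rw [hfib, Fintype.sum_option]
    have h0 : ∑ k ∈ Finset.univ.filter (fun k => cp k = none),
        (cp k).elim 0 q = 0 := by
      apply Finset.sum_eq_zero
      intro k hk
      simp only [Finset.mem_filter] at hk
      rw [hk.2]; rfl
    rw [h0, zero_add]
    have hterm : ∀ i : I, ∑ k ∈ Finset.univ.filter (fun k => cp k = some i),
        (cp k).elim 0 q =
        ((Finset.univ.filter fun k => cp k = some i).card : ℝ) * q i := by
      intro i
      rw [Finset.sum_congr rfl (fun k hk => by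
        simp only [Finset.mem_filter] at hk
        rw [hk.2]; rfl : ∀ k ∈ Finset.univ.filter (fun k => cp k = some i),
          (cp k).elim 0 q = q i)]
      rw [Finset.sum_const, nsmul_eq_mul]
    rw [Finset.sum_congr rfl fun i _ => hterm i]
    symm
    apply Finset.sum_filter_of_ne
    intro i _ hne
    rw [Finset.nonempty_iff_ne_empty]
    intro hcon
    rw [hcon] at hne
    simp at hne
  · unfold revenue
    refine Finset.sum_le_sum fun k _ => ?_
    rw [hmain k]
    cases hcpk : cp k with
    | none => simp
    | some i => simpa using hpq i
end

section
/- (Fill local search) Let p be a price vector, let K̂ = {k ∈ K : c_p(k) is no product} be nonempty, and let i0 ∈ I be a product bought by no customer under p. Set β = min_{k ∈ K̂} b^k and define q by q_j = p_j for j ≠ i0 and q_{i0} = β. Assume that every customer k ∉ K̂ with b^k ≥ β prefers its current purchase to i0, i.e. s_{c_p(k)}^k > s_{i0}^k. Then c_q(k) = i0 for every k ∈ K̂, c_q(k) = c_p(k) for every k ∉ K̂, and φ(q) = φ(p) + |K̂|·β > φ(p). -/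
open Finset

/-- Fill local search: let `K̂` be the nonempty set of customers buying nothing under
`p`, `i0` a product bought by nobody, and `β = min_{k ∈ K̂} b k`. If every buying
customer with budget at least `β` prefers its current product to `i0`, then after
setting `p i0 := β` every customer of `K̂` buys `i0`, all other customers keep their
choice, and the revenue increases by `|K̂|·β > 0`. -/
theorem rpp_fill_local_search
    {I K : Type*} [Fintype I] [Nonempty I] [DecidableEq I] [Fintype K] [Nonempty K]
    (b : K → ℝ) (hb : ∀ k, 0 < b k)
    (s : K → I → ℝ) (hs : ∀ k i, 0 < s k i)
    (hinj : ∀ k, Function.Injective (s k))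
    (p : I → ℝ) (hp : ∀ i, 0 ≤ p i) (i0 : I)
    (cp : K → Option I) (hcp : IsChoice b s p cp)
    (hunsold : ∀ k, cp k ≠ some i0)
    (hne : (Finset.univ.filter fun k => cp k = none).Nonempty)
    (β : ℝ) (hβ : β = (Finset.univ.filter fun k => cp k = none).inf' hne b)
    (hpref : ∀ k j, cp k = some j → β ≤ b k → s k i0 < s k j)
    (cq : K → Option I)
    (hcq : IsChoice b s (Function.update p i0 β) cq) :
    (∀ k, cp k = none → cq k = some i0) ∧
    (∀ k, cp k ≠ none → cq k = cp k) ∧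
    revenue (Function.update p i0 β) cq =
      revenue p cp + ((Finset.univ.filter fun k => cp k = none).card : ℝ) * β ∧
    revenue p cp < revenue (Function.update p i0 β) cq := by
  classical
  have hβpos : 0 < β := by
    rw [hβ]; exact (Finset.lt_inf'_iff hne).2 fun k _ => hb k
  have hβle : ∀ k, cp k = none → β ≤ b k := fun k hk => by
    rw [hβ]; exact Finset.inf'_le b (by simp [hk])
  have h1 : ∀ k, cp k = none → cq k = some i0 := by
    intro k hk
    have hall := (hcp k).2 hk
    cases hq : cq k with
    | none =>
      exfalso
      have := (hcq k).2 hq i0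
      rw [Function.update_self] at this
      exact this (hβle k hk)
    | some j =>
      have hj := (hcq k).1 j hq
      by_cases hji : j = i0
      · rw [hji]
      · exfalso
        have : Function.update p i0 β j = p j := Function.update_of_ne hji _ _
        exact hall j (this ▸ hj.1)
  have h2 : ∀ k j, cp k = some j → cq k = some j := by
    intro k j hk
    have hjp := (hcp k).1 j hk
    have hji0 : j ≠ i0 := fun h => hunsold k (h ▸ hk)
    have hqj : Function.update p i0 β j ≤ b k := by
      rw [Function.update_of_ne hji0]; exact hjp.1
    cases hq : cq k with
    | none => exact absurd hqj ((hcq k).2 hq j)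
    | some j' =>
      have hj' := (hcq k).1 j' hq
      by_cases hj'i : j' = i0
      · exfalso
        have hβb : β ≤ b k := by
          have := hj'.1; rwa [hj'i, Function.update_self] at this
        have hlt := hpref k j hk hβb
        have hle : s k j ≤ s k j' := hj'.2 j hqj
        rw [hj'i] at hle; linarith
      · have hle1 : s k j' ≤ s k j := hjp.2 j' (by
          have := hj'.1; rwa [Function.update_of_ne hj'i] at this)
        have hle2 : s k j ≤ s k j' := hj'.2 j hqj
        have : s k j = s k j' := le_antisymm hle2 hle1
        rw [hinj k this]
  have h2' : ∀ k, cp k ≠ none → cq k = cp k := by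
    intro k hk
    cases hc : cp k with
    | none => exact absurd hc hk
    | some j => exact h2 k j hc
  have hpt : ∀ k, (cq k).elim 0 (Function.update p i0 β) =
      (cp k).elim 0 p + (if cp k = none then β else 0) := by
    intro k
    cases hk : cp k with
    | none => simp [h1 k hk, Function.update_self]
    | some j =>
      have hji0 : j ≠ i0 := fun h => hunsold k (h ▸ hk)
      simp [h2 k j hk, Function.update_of_ne hji0]
  have hrev : revenue (Function.update p i0 β) cq =
      revenue p cp + ((Finset.univ.filter fun k => cp k = none).card : ℝ) * β := by
    unfold revenue
    rw [Finset.sum_congr rfl fun k _ => hpt k, Finset.sum_add_distrib]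
    congr 1
    rw [← Finset.sum_filter, Finset.sum_const, nsmul_eq_mul]
  refine ⟨h1, h2', hrev, ?_⟩
  rw [hrev]
  have hcard : 0 < ((Finset.univ.filter fun k => cp k = none).card : ℝ) := by
    exact_mod_cast Finset.card_pos.2 hne
  nlinarith
end

section
/- (Reassignment local search) Let p be a price vector and i0 ∈ I a product whose buyer set K^{i0} = {k ∈ K : c_p(k) = i0} has at least two elements, with p_{i0} = min_{k ∈ K^{i0}} b^k, and suppose this minimum is attained by a unique customer k* ∈ K^{i0}; set b₂ = min_{k ∈ K^{i0}, k ≠ k*} b^k, so that b₂ > b^{k*} = p_{i0}. Define q by q_j = p_j for j ≠ i0 and q_{i0} = b₂. Then: (a) c_q(k) = i0 for every k ∈ K^{i0} with k ≠ k*; (b) c_q(k) = c_p(k) for every k ∉ K^{i0}; (c) c_q(k*) is the most preferred product of k* in S = {j ∈ I : j ≠ i0 and p_j ≤ b^{k*}}, or no product if S is empty; (d) φ(q) = φ(p) + (|K^{i0}| − 1)(b₂ − b^{k*}) − b^{k*} + r, where r = p_{c_q(k*)} if k* buys a product under q and r = 0 otherwise. -/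
open Finset

/-- Reassignment local search: let `i0` be a product with at least two buyers, its
price equal to the minimum buyer budget, attained uniquely by `k*`, and let `b₂` be the
second cheapest buyer budget. After setting `p i0 := b₂`:
(a) all buyers other than `k*` keep buying `i0`; (b) non-buyers keep their choice;
(c) `k*` buys its most preferred product in `{j ≠ i0 : p j ≤ b k*}`, or nothing if that
set is empty; (d) the revenue becomes
`φ(p) + (|K^{i0}| - 1)(b₂ - b k*) - b k* + r` with `r` the price paid by `k*` under the
new prices (`0` if it buys nothing). -/
theorem rpp_reassignment_local_search
    {I K : Type*} [Fintype I] [Nonempty I] [DecidableEq I]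
    [Fintype K] [Nonempty K] [DecidableEq K]
    (b : K → ℝ) (hb : ∀ k, 0 < b k)
    (s : K → I → ℝ) (hs : ∀ k i, 0 < s k i)
    (hinj : ∀ k, Function.Injective (s k))
    (p : I → ℝ) (hp : ∀ i, 0 ≤ p i) (i0 : I)
    (cp : K → Option I) (hcp : IsChoice b s p cp)
    (hcard : 2 ≤ (Finset.univ.filter fun k => cp k = some i0).card)
    (kstar : K) (hkmem : cp kstar = some i0)
    (hkmin : b kstar = p i0)
    (hkuniq : ∀ k, cp k = some i0 → k ≠ kstar → p i0 < b k)
    (hne2 : ((Finset.univ.filter fun k => cp k = some i0).erase kstar).Nonempty)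
    (b2 : ℝ)
    (hb2 : b2 = ((Finset.univ.filter fun k => cp k = some i0).erase kstar).inf' hne2 b)
    (cq : K → Option I)
    (hcq : IsChoice b s (Function.update p i0 b2) cq) :
    -- (a)
    (∀ k, cp k = some i0 → k ≠ kstar → cq k = some i0) ∧
    -- (b)
    (∀ k, cp k ≠ some i0 → cq k = cp k) ∧
    -- (c)
    ((∀ j, cq kstar = some j →
        j ≠ i0 ∧ p j ≤ b kstar ∧
          ∀ j', j' ≠ i0 → p j' ≤ b kstar → s kstar j' ≤ s kstar j) ∧
      (cq kstar = none → ∀ j, j ≠ i0 → ¬ p j ≤ b kstar)) ∧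
    -- (d)
    revenue (Function.update p i0 b2) cq =
      revenue p cp
        + (((Finset.univ.filter fun k => cp k = some i0).card : ℝ) - 1)
            * (b2 - b kstar)
        - b kstar + (cq kstar).elim 0 p := by
  classical
  set q := Function.update p i0 b2 with hq
  set F := Finset.univ.filter fun k => cp k = some i0 with hF
  have hkF : kstar ∈ F := by simp [hF, hkmem]
  -- b kstar < b2
  have hbk_lt : b kstar < b2 := by
    rw [hb2]
    rw [Finset.lt_inf'_iff]
    intro k hk
    simp only [Finset.mem_erase, Finset.mem_filter, Finset.mem_univ, true_and] at hk
    rw [hkmin]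
    exact hkuniq k hk.2 hk.1
  have hqi0 : q i0 = b2 := Function.update_self _ _ _
  have hqne : ∀ j, j ≠ i0 → q j = p j := fun j hj => Function.update_of_ne hj _ _
  have hb2le : ∀ k ∈ F.erase kstar, b2 ≤ b k := by
    intro k hk
    rw [hb2]
    exact Finset.inf'_le b hk
  -- (a)
  have ha : ∀ k, cp k = some i0 → k ≠ kstar → cq k = some i0 := by
    intro k hk hne
    have hkE : k ∈ F.erase kstar := by
      rw [Finset.mem_erase]; exact ⟨hne, Finset.mem_filter.mpr ⟨Finset.mem_univ k, hk⟩⟩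
    have hqi0k : q i0 ≤ b k := by rw [hqi0]; exact hb2le k hkE
    have h1 := (hcp k).1 i0 hk
    cases hcqk : cq k with
    | none => exact absurd hqi0k ((hcq k).2 hcqk i0)
    | some j =>
      have h2 := (hcq k).1 j hcqk
      have hji : s k i0 ≤ s k j := h2.2 i0 hqi0k
      have hij : s k j ≤ s k i0 := by
        by_cases hj : j = i0
        · rw [hj]
        · exact h1.2 j (by rw [← hqne j hj]; exact h2.1)
      have : j = i0 := hinj k (le_antisymm hij hji)
      rw [this]
  -- (b)
  have hbb : ∀ k, cp k ≠ some i0 → cq k = cp k := by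
    intro k hk
    have hpi0b2 : p i0 < b2 := hkmin ▸ hbk_lt
    cases hcpk : cp k with
    | none =>
      have hn := (hcp k).2 hcpk
      cases hcqk : cq k with
      | none => rfl
      | some j =>
        have h2 := (hcq k).1 j hcqk
        by_cases hj : j = i0
        · subst hj
          rw [hqi0] at h2
          exact absurd (le_of_lt (lt_of_lt_of_le hpi0b2 h2.1)) (hn j)
        · rw [hqne j hj] at h2
          exact absurd h2.1 (hn j)
    | some j =>
      have hj : j ≠ i0 := fun h => hk (by rw [hcpk, h])
      have h1 := (hcp k).1 j hcpk
      have hqjb : q j ≤ b k := by rw [hqne j hj]; exact h1.1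
      cases hcqk : cq k with
      | none => exact absurd hqjb ((hcq k).2 hcqk j)
      | some j' =>
        have h2 := (hcq k).1 j' hcqk
        have h12 : s k j ≤ s k j' := h2.2 j hqjb
        have h21 : s k j' ≤ s k j := by
          apply h1.2
          by_cases hj' : j' = i0
          · subst hj'
            rw [hqi0] at h2
            exact le_of_lt (lt_of_lt_of_le hpi0b2 h2.1)
          · rw [← hqne j' hj']; exact h2.1
        rw [hinj k (le_antisymm h21 h12)]
  -- (c)
  have hqi0star : ¬ q i0 ≤ b kstar := by rw [hqi0]; exact not_le.mpr hbk_lt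
  have hc1 : ∀ j, cq kstar = some j →
      j ≠ i0 ∧ p j ≤ b kstar ∧
        ∀ j', j' ≠ i0 → p j' ≤ b kstar → s kstar j' ≤ s kstar j := by
    intro j hj
    have h2 := (hcq kstar).1 j hj
    have hji : j ≠ i0 := by rintro rfl; exact hqi0star h2.1
    refine ⟨hji, by rw [← hqne j hji]; exact h2.1, ?_⟩
    intro j' hj' hpj'
    exact h2.2 j' (by rw [hqne j' hj']; exact hpj')
  have hc2 : cq kstar = none → ∀ j, j ≠ i0 → ¬ p j ≤ b kstar := by
    intro h j hj
    rw [← hqne j hj]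
    exact (hcq kstar).2 h j
  refine ⟨ha, hbb, ⟨hc1, hc2⟩, ?_⟩
  -- (d)
  have hsum : ∀ (f : K → ℝ), ∑ k : K, f k =
      ∑ k ∈ F, f k + ∑ k ∈ Finset.univ.filter (fun k => ¬ cp k = some i0), f k := by
    intro f
    rw [hF, Finset.sum_filter_add_sum_filter_not]
  have hout : ∑ k ∈ Finset.univ.filter (fun k => ¬ cp k = some i0), (cq k).elim 0 q =
      ∑ k ∈ Finset.univ.filter (fun k => ¬ cp k = some i0), (cp k).elim 0 p := by
    apply Finset.sum_congr rfl
    intro k hk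
    rw [Finset.mem_filter] at hk
    rw [hbb k hk.2]
    cases hcpk : cp k with
    | none => rfl
    | some j =>
      have hj : j ≠ i0 := fun h => hk.2 (by rw [hcpk, h])
      simp [hqne j hj]
  have hstar : (cq kstar).elim 0 q = (cq kstar).elim 0 p := by
    cases hcqk : cq kstar with
    | none => rfl
    | some j =>
      simp only [Option.elim]
      exact hqne j (hc1 j hcqk).1
  have hinF : ∑ k ∈ F, (cq k).elim 0 q =
      (cq kstar).elim 0 p + ((F.card : ℝ) - 1) * b2 := by
    rw [← Finset.add_sum_erase F _ hkF, hstar]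
    congr 1
    have : ∀ k ∈ F.erase kstar, (cq k).elim 0 q = b2 := by
      intro k hk
      simp only [hF, Finset.mem_erase, Finset.mem_filter, Finset.mem_univ, true_and] at hk
      rw [ha k hk.2 hk.1]
      simpa using hqi0
    rw [Finset.sum_congr rfl this, Finset.sum_const, Finset.card_erase_of_mem hkF]
    have h1 : 1 ≤ F.card := le_trans (by norm_num) hcard
    rw [nsmul_eq_mul, Nat.cast_sub h1, Nat.cast_one]
  have hinFp : ∑ k ∈ F, (cp k).elim 0 p = (F.card : ℝ) * b kstar := by
    have : ∀ k ∈ F, (cp k).elim 0 p = b kstar := by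
      intro k hk
      simp only [hF, Finset.mem_filter, Finset.mem_univ, true_and] at hk
      rw [hk]
      simp [hkmin]
    rw [Finset.sum_congr rfl this, Finset.sum_const, nsmul_eq_mul]
  rw [revenue, revenue, hsum (fun k => (cq k).elim 0 q),
    hsum (fun k => (cp k).elim 0 p), hout, hinF, hinFp]
  ring
end

section
/- (Conditional reassignment local search) Let p be a price vector and i0 ∈ I a product whose buyer set K^{i0} = {k ∈ K : c_p(k) = i0} has at least two elements, with p_{i0} = min_{k ∈ K^{i0}} b^k, and suppose this minimum is attained by a unique customer k* ∈ K^{i0}; set b₂ = min_{k ∈ K^{i0}, k ≠ k*} b^k, so that b₂ > b^{k*} = p_{i0}. Define q by q_j = p_j for j ≠ i0 and q_{i0} = b₂. Assume additionally that there exists a product î ≠ i0 with p_î = b^{k*} which is the most preferred product of k* among {j ∈ I : j ≠ i0 and p_j ≤ b^{k*}}. Then c_q(k*) = î, c_q(k) = i0 for every k ∈ K^{i0} with k ≠ k*, c_q(k) = c_p(k) for every k ∉ K^{i0}, and φ(q) = φ(p) + (|K^{i0}| − 1)(b₂ − b^{k*}) > φ(p). -/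
open Finset

lemma choice_eq_some' {I K : Type*} (b : K → ℝ) (s : K → I → ℝ)
    (p : I → ℝ) (c : K → Option I) (hc : IsChoice b s p c)
    (hinj : ∀ k, Function.Injective (s k)) (k : K) (i : I)
    (hi : p i ≤ b k) (hmax : ∀ j, p j ≤ b k → s k j ≤ s k i) : c k = some i := by
  cases h : c k with
  | none => exact absurd hi ((hc k).2 h i)
  | some j =>
    have hj := (hc k).1 j h
    have : i = j := hinj k (le_antisymm (hj.2 i hi) (hmax j hj.1))
    rw [this]

/-- Conditional reassignment local search: under the hypotheses of the reassignment
local search, if moreover there is a product `î ≠ i0` priced exactly at `b k*` which is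
the most preferred product of `k*` among `{j ≠ i0 : p j ≤ b k*}`, then `k*` switches to
`î`, all other buyers of `i0` keep buying it, all other customers keep their choice,
and the revenue strictly increases by `(|K^{i0}| - 1)(b₂ - b k*)`. -/
theorem rpp_conditional_reassignment_local_search
    {I K : Type*} [Fintype I] [Nonempty I] [DecidableEq I]
    [Fintype K] [Nonempty K] [DecidableEq K]
    (b : K → ℝ) (hb : ∀ k, 0 < b k)
    (s : K → I → ℝ) (hs : ∀ k i, 0 < s k i)
    (hinj : ∀ k, Function.Injective (s k))
    (p : I → ℝ) (hp : ∀ i, 0 ≤ p i) (i0 : I)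
    (cp : K → Option I) (hcp : IsChoice b s p cp)
    (hcard : 2 ≤ (Finset.univ.filter fun k => cp k = some i0).card)
    (kstar : K) (hkmem : cp kstar = some i0)
    (hkmin : b kstar = p i0)
    (hkuniq : ∀ k, cp k = some i0 → k ≠ kstar → p i0 < b k)
    (hne2 : ((Finset.univ.filter fun k => cp k = some i0).erase kstar).Nonempty)
    (b2 : ℝ)
    (hb2 : b2 = ((Finset.univ.filter fun k => cp k = some i0).erase kstar).inf' hne2 b)
    (ihat : I) (hihat_ne : ihat ≠ i0) (hihat_price : p ihat = b kstar)
    (hihat_max : ∀ j, j ≠ i0 → p j ≤ b kstar → s kstar j ≤ s kstar ihat)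
    (cq : K → Option I)
    (hcq : IsChoice b s (Function.update p i0 b2) cq) :
    cq kstar = some ihat ∧
    (∀ k, cp k = some i0 → k ≠ kstar → cq k = some i0) ∧
    (∀ k, cp k ≠ some i0 → cq k = cp k) ∧
    revenue (Function.update p i0 b2) cq =
      revenue p cp
        + (((Finset.univ.filter fun k => cp k = some i0).card : ℝ) - 1)
            * (b2 - b kstar) ∧
    revenue p cp < revenue (Function.update p i0 b2) cq := by
  set q := Function.update p i0 b2 with hq
  set S := Finset.univ.filter fun k => cp k = some i0 with hS
  have hqi0 : q i0 = b2 := Function.update_self _ _ _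
  have hqne : ∀ j, j ≠ i0 → q j = p j := fun j hj => Function.update_of_ne hj _ _
  have hlt : b kstar < b2 := by
    rw [hb2, Finset.lt_inf'_iff]
    intro k hk
    simp only [hS, Finset.mem_erase, Finset.mem_filter] at hk
    rw [hkmin]
    exact hkuniq k hk.2.2 hk.1
  have h1 : cq kstar = some ihat := by
    refine choice_eq_some' b s q cq hcq hinj kstar ihat ?_ ?_
    · rw [hqne ihat hihat_ne, hihat_price]
    · intro j hj
      by_cases hji : j = i0
      · subst hji; rw [hqi0] at hj; linarith
      · exact hihat_max j hji (by rwa [hqne j hji] at hj)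
  have h2 : ∀ k, cp k = some i0 → k ≠ kstar → cq k = some i0 := by
    intro k hk hkne
    have hkS : k ∈ S.erase kstar := by
      simp only [hS, Finset.mem_erase, Finset.mem_filter]
      exact ⟨hkne, Finset.mem_univ k, hk⟩
    have hb2k : b2 ≤ b k := hb2 ▸ Finset.inf'_le b hkS
    have hcpk := (hcp k).1 i0 hk
    refine choice_eq_some' b s q cq hcq hinj k i0 ?_ ?_
    · rw [hqi0]; exact hb2k
    · intro j hj
      by_cases hji : j = i0
      · subst hji; exact le_refl _
      · exact hcpk.2 j (by rwa [hqne j hji] at hj)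
  have h3 : ∀ k, cp k ≠ some i0 → cq k = cp k := by
    intro k hk
    cases hck : cp k with
    | none =>
      have hnone := (hcp k).2 hck
      cases hcqk : cq k with
      | none => rfl
      | some j =>
        have hj := (hcq k).1 j hcqk
        exfalso
        have hqj : q j ≤ b k := hj.1
        by_cases hji : j = i0
        · rw [hji, hqi0] at hqj
          have hni0 := hnone i0
          rw [← hkmin] at hni0
          exact hni0 (le_trans hlt.le hqj)
        · rw [hqne j hji] at hqj
          exact hnone j hqj
    | some j =>
      have hji : j ≠ i0 := fun h => hk (h ▸ hck)
      have hpj := (hcp k).1 j hck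
      refine choice_eq_some' b s q cq hcq hinj k j ?_ ?_
      · rw [hqne j hji]; exact hpj.1
      · intro l hl
        by_cases hli : l = i0
        · have hb2k : b2 ≤ b k := by rwa [hli, hqi0] at hl
          have hpl : p l ≤ b k := by rw [hli, ← hkmin]; linarith
          exact hpj.2 l hpl
        · exact hpj.2 l (by rwa [hqne l hli] at hl)
  have hcard1 : (S.erase kstar).card = S.card - 1 := by
    apply Finset.card_erase_of_mem
    rw [hS, Finset.mem_filter]
    exact ⟨Finset.mem_univ _, hkmem⟩
  have hrev : revenue q cq = revenue p cp + ((S.card : ℝ) - 1) * (b2 - b kstar) := by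
    have hdiff : revenue q cq - revenue p cp
        = ∑ k : K, ((cq k).elim 0 q - (cp k).elim 0 p) := by
      rw [Finset.sum_sub_distrib]; rfl
    have h0 : ∀ k ∈ (Finset.univ : Finset K), k ∉ S.erase kstar →
        (cq k).elim 0 q - (cp k).elim 0 p = 0 := by
      intro k _ hk
      rw [Finset.mem_erase] at hk
      push_neg at hk
      by_cases hks : k = kstar
      · subst hks
        rw [h1, hkmem]
        simp only [Option.elim]
        rw [hqne ihat hihat_ne, hihat_price, hkmin, sub_self]
      · have hkS : cp k ≠ some i0 := by
          intro hc
          exact absurd (by simp only [hS, Finset.mem_filter]; exact ⟨Finset.mem_univ _, hc⟩) (hk hks)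
        rw [h3 k hkS]
        cases hck : cp k with
        | none => simp
        | some j =>
          have hji : j ≠ i0 := fun h => hkS (h ▸ hck)
          simp only [Option.elim]
          rw [hqne j hji, sub_self]
    have hkey : ∑ k : K, ((cq k).elim 0 q - (cp k).elim 0 p)
        = ∑ k ∈ S.erase kstar, ((cq k).elim 0 q - (cp k).elim 0 p) :=
      (Finset.sum_subset (Finset.subset_univ _) h0).symm
    have hval : ∑ k ∈ S.erase kstar, ((cq k).elim 0 q - (cp k).elim 0 p)
        = ∑ _k ∈ S.erase kstar, (b2 - b kstar) := by
      apply Finset.sum_congr rfl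
      intro k hk
      simp only [hS, Finset.mem_erase, Finset.mem_filter] at hk
      rw [h2 k hk.2.2 hk.1, hk.2.2]
      simp only [Option.elim]
      rw [hqi0, hkmin]
    have hc2 : (1 : ℕ) ≤ S.card := le_trans (by norm_num) hcard
    have : revenue q cq - revenue p cp = ((S.card : ℝ) - 1) * (b2 - b kstar) := by
      rw [hdiff, hkey, hval, Finset.sum_const, hcard1, nsmul_eq_mul,
        Nat.cast_sub hc2, Nat.cast_one]
    linarith
  have hpos : 0 < ((S.card : ℝ) - 1) * (b2 - b kstar) := by
    have : (2 : ℝ) ≤ (S.card : ℝ) := by exact_mod_cast hcard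
    have h' : 0 < (S.card : ℝ) - 1 := by linarith
    exact mul_pos h' (by linarith)
  exact ⟨h1, h2, h3, hrev, by rw [hrev]; linarith⟩
end
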